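/- arXiv:1903.08014 — 2 statements merged into one kernel-verified Lean document; each statement's English description precedes it below -/
import Mathlib

section
/- Let n ≥ 2 and c ≥ 2 be integers, and let S ⊆ {1, …, n} be a nonempty set with maximum element i. Assign to each j ∈ S the weight n^(c·j). Then n^(c·i) / (∑_{j ∈ S} n^(c·j)) ≥ 1 − n^(1−c); in particular, an element of S sampled with probability proportional to its weight equals the maximum element of S with probability at least 1 − 1/n. -/
/-! Every weight is a power of `x = n ^ c`, and the weights below the maximum `x ^ i` are
dominated by the full geometric sum `∑_{j ≤ i} x ^ j < x ^ (i + 1) / (x - 1)`. Hence the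
maximum carries at least a `1 - 1 / x = 1 - n ^ (-c)` fraction of the total weight. -/

theorem sum_pow_mul_sub_one_le_pow_succ {R : Type*} [CommRing R] [LinearOrder R]
    [IsStrictOrderedRing R] {x : R} (hx : 1 ≤ x) {S : Finset ℕ} {i : ℕ}
    (hS : ∀ j ∈ S, j ≤ i) :
    (∑ j ∈ S, x ^ j) * (x - 1) ≤ x ^ (i + 1) := by
  have hsub : S ⊆ Finset.range (i + 1) := fun j hj ↦ Finset.mem_range_succ_iff.mpr (hS j hj)
  calc (∑ j ∈ S, x ^ j) * (x - 1)
      ≤ (∑ j ∈ Finset.range (i + 1), x ^ j) * (x - 1) := by gcongr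
    _ = x ^ (i + 1) - 1 := geom_sum_mul x (i + 1)
    _ ≤ x ^ (i + 1) := by linarith

theorem one_sub_inv_le_pow_max'_div_sum {K : Type*} [Field K] [LinearOrder K]
    [IsStrictOrderedRing K] {x : K} (hx : 1 < x) (S : Finset ℕ) (hne : S.Nonempty) :
    1 - x⁻¹ ≤ x ^ S.max' hne / ∑ j ∈ S, x ^ j := by
  have hx0 : 0 < x := zero_lt_one.trans hx
  have hsum : 0 < ∑ j ∈ S, x ^ j := Finset.sum_pos (fun j _ ↦ by positivity) hne
  have hgeom := sum_pow_mul_sub_one_le_pow_succ hx.le (i := S.max' hne) fun j hj ↦ S.le_max' j hj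
  rw [le_div_iff₀ hsum]
  calc (1 - x⁻¹) * ∑ j ∈ S, x ^ j = (∑ j ∈ S, x ^ j) * (x - 1) / x := by field_simp
    _ ≤ x ^ (S.max' hne + 1) / x := by gcongr
    _ = x ^ S.max' hne := by rw [pow_succ, mul_div_cancel_right₀ _ hx0.ne']

theorem stmt_0_general (n c : ℕ) (hn : 2 ≤ n) (hc : 2 ≤ c)
    (S : Finset ℕ) (hne : S.Nonempty) :
    (1 : ℝ) - (n : ℝ) ^ ((1 : ℤ) - (c : ℤ)) ≤
      (n : ℝ) ^ (c * S.max' hne) / ∑ j ∈ S, (n : ℝ) ^ (c * j) ∧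
    (1 : ℝ) - 1 / (n : ℝ) ≤
      (n : ℝ) ^ (c * S.max' hne) / ∑ j ∈ S, (n : ℝ) ^ (c * j) := by
  have hn1 : (1 : ℝ) < n := by exact_mod_cast hn
  have hfrac : 1 - ((n : ℝ) ^ c)⁻¹ ≤ (n : ℝ) ^ (c * S.max' hne) / ∑ j ∈ S, (n : ℝ) ^ (c * j) := by
    simpa only [pow_mul] using one_sub_inv_le_pow_max'_div_sum (one_lt_pow₀ hn1 (by omega)) S hne
  have hinv : ((n : ℝ) ^ c)⁻¹ ≤ (n : ℝ) ^ ((1 : ℤ) - (c : ℤ)) := by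
    rw [← zpow_natCast, ← zpow_neg]
    exact zpow_le_zpow_right₀ hn1.le (by omega)
  have hone_div : (n : ℝ) ^ ((1 : ℤ) - (c : ℤ)) ≤ 1 / n := by
    rw [one_div, ← zpow_neg_one]
    exact zpow_le_zpow_right₀ hn1.le (by omega)
  exact ⟨by linarith, by linarith⟩

/-- the quantitative core of the reduction from range maximum to
weighted range sampling.  If element `j` gets weight `n^(c*j)`, the maximum
element of a nonempty query range `S ⊆ {1,…,n}` carries at least a
`1 - n^(1-c) ≥ 1 - 1/n` fraction of the total weight. -/
theorem stmt_0 (n c : ℕ) (hn : 2 ≤ n) (hc : 2 ≤ c)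
    (S : Finset ℕ) (hS : S ⊆ Finset.Icc 1 n) (hne : S.Nonempty) :
    (1 : ℝ) - (n : ℝ) ^ ((1 : ℤ) - (c : ℤ)) ≤
      (n : ℝ) ^ (c * S.max' hne) / ∑ j ∈ S, (n : ℝ) ^ (c * j) ∧
    (1 : ℝ) - 1 / (n : ℝ) ≤
      (n : ℝ) ^ (c * S.max' hne) / ∑ j ∈ S, (n : ℝ) ^ (c * j) :=
  stmt_0_general n c hn hc S hne
end

section
/- Let π ∈ (0, 1], u ∈ [0, 1], q ≥ 0, and ε ∈ (0, 1/2] with 1 − π ≤ ε. Define ρ = q·π/(1 − (1−π)(1−u)) and ρ′ = q·(π + (1−π)(1−u)). Then ρ ≤ ρ′ ≤ q ≤ (1+2ε)·ρ. -/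
/-!
Write `f = (1 - π)(1 - u)` for the failure probability of a round, so `0 ≤ f ≤ 1 - π ≤ ε`.
Conditioning on the first round gives the renewal equation `ρ = q π + f ρ`, and `ρ ≤ q`
since `π ≤ 1 - f`. The one-shot scheme replaces the continuation `ρ` after a failure by `q`,
so `ρ ≤ ρ' = q π + f q ≤ q`. Finally `ρ ≥ q π` and `(1 + 2ε) π ≥ (1 + 2ε)(1 - ε) ≥ 1`
for `0 ≤ ε ≤ 1/2`.
-/

section RejectionSampling

variable {p f q : ℝ}

theorem mul_div_one_sub_eq_add_mul (hf : f ≠ 1) :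
    q * p / (1 - f) = q * p + f * (q * p / (1 - f)) := by
  have : 1 - f ≠ 0 := sub_ne_zero.mpr (Ne.symm hf)
  field_simp
  ring

theorem mul_div_one_sub_le (hq : 0 ≤ q) (hf : f < 1) (hpf : p ≤ 1 - f) :
    q * p / (1 - f) ≤ q := by
  rw [div_le_iff₀ (sub_pos.mpr hf)]
  exact mul_le_mul_of_nonneg_left hpf hq

end RejectionSampling

theorem one_le_one_add_two_mul_mul {p ε : ℝ} (hp : p ≤ 1) (hpε : 1 - p ≤ ε) (hε : ε ≤ 1 / 2) :
    1 ≤ (1 + 2 * ε) * p := by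
  nlinarith [mul_le_mul_of_nonneg_left hpε (by linarith : (0 : ℝ) ≤ 1 + 2 * ε)]

theorem stmt_6_general (pi u q ε : ℝ) (hpi1 : pi ≤ 1)
    (hu0 : 0 ≤ u) (hu1 : u ≤ 1) (hq : 0 ≤ q)
    (hε1 : ε ≤ 1 / 2) (hπε : 1 - pi ≤ ε)
    (ρ ρ' : ℝ)
    (hρ : ρ = q * pi / (1 - (1 - pi) * (1 - u)))
    (hρ' : ρ' = q * (pi + (1 - pi) * (1 - u))) :
    ρ ≤ ρ' ∧ ρ' ≤ q ∧ q ≤ (1 + 2 * ε) * ρ := by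
  set f := (1 - pi) * (1 - u)
  have hf0 : 0 ≤ f := mul_nonneg (by linarith) (by linarith)
  have hf_le : f ≤ 1 - pi := mul_le_of_le_one_right (by linarith) (by linarith)
  have hf1 : f < 1 := by linarith
  have hρq : ρ ≤ q := hρ ▸ mul_div_one_sub_le hq hf1 (by linarith)
  refine ⟨?_, ?_, ?_⟩
  · calc ρ = q * pi + f * ρ := hρ ▸ mul_div_one_sub_eq_add_mul hf1.ne
      _ ≤ q * pi + f * q := by gcongr
      _ = ρ' := by rw [hρ']; ring
  · rw [hρ']
    exact mul_le_of_le_one_right hq (by linarith)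
  · have hqpi : q * pi ≤ ρ :=
      hρ ▸ le_div_self (mul_nonneg hq (by linarith)) (by linarith) (by linarith)
    calc q ≤ q * ((1 + 2 * ε) * pi) :=
          le_mul_of_one_le_right hq (one_le_one_add_two_mul_mul hpi1 hπε hε1)
      _ = (1 + 2 * ε) * (q * pi) := by ring
      _ ≤ (1 + 2 * ε) * ρ := by gcongr; linarith

/-- the inside-point case of the one-shot deterministic sampling
lemma.  With coin probability `pi ≥ 1 - ε` of visiting the inside structure,
conditional draw probability `q`, and per-round failure probability
`(1 - pi)·(1 - u)`, the rejection-sampling probability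
`ρ = q·pi/(1-(1-pi)(1-u))` and the one-shot probability
`ρ' = q·(pi + (1-pi)(1-u))` satisfy `ρ ≤ ρ' ≤ q ≤ (1+2ε)·ρ`. -/
theorem stmt_6 (pi u q ε : ℝ) (hpi0 : 0 < pi) (hpi1 : pi ≤ 1)
    (hu0 : 0 ≤ u) (hu1 : u ≤ 1) (hq : 0 ≤ q)
    (hε0 : 0 < ε) (hε1 : ε ≤ 1 / 2) (hπε : 1 - pi ≤ ε)
    (ρ ρ' : ℝ)
    (hρ : ρ = q * pi / (1 - (1 - pi) * (1 - u)))
    (hρ' : ρ' = q * (pi + (1 - pi) * (1 - u))) :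
    ρ ≤ ρ' ∧ ρ' ≤ q ∧ q ≤ (1 + 2 * ε) * ρ :=
  stmt_6_general pi u q ε hpi1 hu0 hu1 hq hε1 hπε ρ ρ' hρ hρ'
end
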